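/- For all positive integers j < k and l < m with (j,k) ≠ (l,m) and j² - k² - l² + m² = 0, one has j⁻⁴ - k⁻⁴ - l⁻⁴ + m⁻⁴ ≠ 0. -/

import Mathlib

/-!
With `a = j²`, `b = m²`, `c = k²`, `d = l²` the hypotheses say `a + b = c + d =: s` and
`1/a² + 1/b² = 1/c² + 1/d²`. Since `1/a² + 1/b² = (s² - 2ab)/(ab)²` is strictly decreasing in
the product `ab` on `0 < ab ≤ s²/4`, the products agree, so `{a, b} = {c, d}`; this forces
`j = k` or `(j, k) = (l, m)`.
-/

theorem eq_and_eq_or_eq_and_eq_of_add_eq_add_of_mul_eq_mul {R : Type*} [CommRing R]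
    [NoZeroDivisors R] {a b c d : R} (hsum : a + b = c + d) (hprod : a * b = c * d) :
    a = c ∧ b = d ∨ a = d ∧ b = c := by
  have hfac : (a - c) * (a - d) = 0 := by linear_combination a * hsum - hprod
  rcases mul_eq_zero.mp hfac with hac | had
  · have hac : a = c := sub_eq_zero.mp hac
    exact Or.inl ⟨hac, by linear_combination hsum - hac⟩
  · have had : a = d := sub_eq_zero.mp had
    exact Or.inr ⟨had, by linear_combination hsum - had⟩

theorem mul_eq_mul_of_add_eq_add_of_inv_sq_add_inv_sq_eq {K : Type*} [Field K] [LinearOrder K]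
    [IsStrictOrderedRing K] {a b c d : K} (ha : 0 < a) (hb : 0 < b) (hc : 0 < c) (hd : 0 < d)
    (hsum : a + b = c + d) (hinv : 1 / a ^ 2 + 1 / b ^ 2 = 1 / c ^ 2 + 1 / d ^ 2) :
    a * b = c * d := by
  have hcleared : ((a + b) ^ 2 - 2 * (a * b)) * (c * d) ^ 2
      = ((c + d) ^ 2 - 2 * (c * d)) * (a * b) ^ 2 := by
    field_simp at hinv
    linear_combination hinv
  have hfac : (c * d - a * b) * ((a + b) ^ 2 * (a * b + c * d) - 2 * (a * b) * (c * d)) = 0 := by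
    linear_combination hcleared - (a * b) ^ 2 * (a + b + c + d) * hsum
  -- AM-GM: `(a + b)² ≥ 4ab`, so the second factor is at least `4(ab)² + 2ab·cd > 0`.
  have hamgm : 4 * (a * b) ≤ (a + b) ^ 2 := by nlinarith [sq_nonneg (a - b)]
  have hsecond : 0 < (a + b) ^ 2 * (a * b + c * d) - 2 * (a * b) * (c * d) := by
    nlinarith [mul_pos (mul_pos ha hb) (mul_pos hc hd), mul_pos ha hb]
  exact (sub_eq_zero.mp ((mul_eq_zero.mp hfac).resolve_right hsecond.ne')).symm

theorem resonance_nondegeneracy (j k l m : ℕ) (hj : 0 < j) (hl : 0 < l)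
    (hjk : j < k) (hlm : l < m) (hne : (j, k) ≠ (l, m))
    (hres : j ^ 2 + m ^ 2 = k ^ 2 + l ^ 2) :
    1 / (j : ℝ) ^ 4 - 1 / (k : ℝ) ^ 4 - 1 / (l : ℝ) ^ 4 + 1 / (m : ℝ) ^ 4 ≠ 0 := by
  intro h
  have sq_cast_inj : ∀ x y : ℕ, (x : ℝ) ^ 2 = (y : ℝ) ^ 2 → x = y := fun x y hxy =>
    Nat.pow_left_injective two_ne_zero (by exact_mod_cast hxy)
  have hsum : (j : ℝ) ^ 2 + (m : ℝ) ^ 2 = (k : ℝ) ^ 2 + (l : ℝ) ^ 2 := by exact_mod_cast hres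
  have hinv : 1 / ((j : ℝ) ^ 2) ^ 2 + 1 / ((m : ℝ) ^ 2) ^ 2
      = 1 / ((k : ℝ) ^ 2) ^ 2 + 1 / ((l : ℝ) ^ 2) ^ 2 := by
    simp only [← pow_mul]
    linarith
  have hk : 0 < k := hj.trans hjk
  have hm : 0 < m := hl.trans hlm
  have hprod := mul_eq_mul_of_add_eq_add_of_inv_sq_add_inv_sq_eq (by positivity)
    (by positivity) (by positivity) (by positivity) hsum hinv
  rcases eq_and_eq_or_eq_and_eq_of_add_eq_add_of_mul_eq_mul hsum hprod with ⟨hjk', -⟩ | ⟨hjl, hmk⟩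
  · exact hjk.ne (sq_cast_inj j k hjk')
  · exact hne (by rw [sq_cast_inj j l hjl, sq_cast_inj m k hmk])
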